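/- Assume 0 < ra < 1/(2s₂), assume the points x_i (defined by x₀ = 1/2 + ra, x₁ = (s₂+2rs₂a)(1/2 + 1/(2s₂) − x₀), x_{i+1} = (s₁+2rs₁a)(x_i − 1/2 + 1/(2s₁)) for i ≥ 1) satisfy x_i ∈ [1/2 − 1/(2s₁), 1/2) for i = 1, …, m−1 and x_m = 1/2 − 1/(2s₁). Then for all real numbers c, α₀, α₁, …, α_m, the function f = c + α₀·1_{I₀} + Σ_{i=1}^m α_i·1_{I_i} on [0,1] satisfies, for almost every x ∈ [0,1], (P_a f)(x) = c' + α₀'·1_{I₀}(x) + Σ_{i=1}^m α_i'·1_{I_i}(x), where the column vector (c', α₀', α₁', …, α_m') equals A_m applied to the column vector (c, α₀, α₁, …, α_m). -/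

import Mathlib

open MeasureTheory
open Fin.NatCast

/-- The orbit of the point 1/2 + ra under the perturbed W-shaped map W_a. -/
noncomputable def orbitW (s₁ s₂ r a : ℝ) : ℕ → ℝ
  | 0 => 1 / 2 + r * a
  | 1 => (s₂ + 2 * r * s₂ * a) * (1 / 2 + 1 / (2 * s₂) - (1 / 2 + r * a))
  | (n + 2) => (s₁ + 2 * r * s₁ * a) * (orbitW s₁ s₂ r a (n + 1) - 1 / 2 + 1 / (2 * s₁))

/-- The Perron–Frobenius operator P_a of the map W_a. -/
noncomputable def Pa (s₁ s₂ r a : ℝ) (f : ℝ → ℝ) (x : ℝ) : ℝ :=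
  (1 / (2 * s₂)) * f ((1 - x) / (2 * s₂)) +
  (1 / (s₁ + 2 * r * s₁ * a)) * f (x / (s₁ + 2 * r * s₁ * a) + 1 / 2 - 1 / (2 * s₁)) *
    (Set.Icc (0 : ℝ) (1 / 2 + r * a)).indicator (fun _ => (1 : ℝ)) x +
  (1 / (s₂ + 2 * r * s₂ * a)) * f (1 / 2 + 1 / (2 * s₂) - x / (s₂ + 2 * r * s₂ * a)) *
    (Set.Icc (0 : ℝ) (1 / 2 + r * a)).indicator (fun _ => (1 : ℝ)) x +
  (1 / (2 * s₁)) * f ((x - 1) / (2 * s₁) + 1)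

/-- The (m+2)×(m+2) matrix A_m from the paper, rows/columns indexed 0,…,m+1. -/
noncomputable def Amat (s₁ s₂ r a : ℝ) (m : ℕ) : Matrix (Fin (m + 2)) (Fin (m + 2)) ℝ :=
  Matrix.of fun i j =>
    if i.val = 0 then
      (if j.val = 0 then 1 / 2 else if j.val = 1 then 1 / (2 * s₂) else 0)
    else if i.val = 1 then
      (if j.val = 0 then 1 / (1 + 2 * r * a)
       else if j.val = 1 ∨ j.val = m + 1 then 1 / (s₁ + 2 * r * s₁ * a) else 0)
    else if i.val = 2 then
      (if 1 ≤ j.val then 1 / (s₂ + 2 * r * s₂ * a) else 0)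
    else
      (if j.val + 1 = i.val then 1 / (s₁ + 2 * r * s₁ * a) else 0)


/-!
Write `xᵢ = orbitW s₁ s₂ r a i`, so `I₀ = [0, x₀]` and `Iᵢ = [xᵢ, x₀]`, and note
`x_m = 1/2 - 1/(2s₁) = 1/(2s₂)`. For `0 < x ≤ 1` the four inverse branches see the step
function as follows. `τ₁ x < x_m ≤ xᵢ` lies in `I₀` only, and `τ₄ x ≥ 1 - 1/(2s₁) > x₀` in none
of the intervals. On `I₀`, `τ₂` maps `[x_{i+1}, x₀]` into `[xᵢ, x₀]` exactly (this is the
recursion defining the orbit) and `τ₂ x ≥ τ₂ 0 = x_m`, so it shifts `1_{Iᵢ}` to `1_{I_{i+1}}`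
and turns `1_{I_m}` into a constant; `τ₃ x ≥ 1/2 > xᵢ`, so every `1_{Iᵢ} ∘ τ₃` is `1_{I₁}`.
Collecting coefficients with `1/(2s₁) + 1/(2s₂) = 1/2` and
`1/(s₁(1 + 2ra)) + 1/(s₂(1 + 2ra)) = 1/(1 + 2ra)` gives the rows of `A_m`. The identity fails
only at `x = 0`, where `τ₁ 0 = x_m`.
-/

open Finset
open scoped Matrix

section MatrixRows

variable {s₁ s₂ r a : ℝ} {m : ℕ} (w : Fin (m + 2) → ℝ)

lemma Fin.sum_univ_add_two_eq {M : Type*} [AddCommMonoid M] (f : Fin (m + 2) → M) :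
    ∑ j, f j = f 0 + f 1 + ∑ i ∈ Icc 1 m, f (i + 1 : ℕ) := by
  rw [← Ico_add_one_right_eq_Icc, ← sum_Ico_add' (fun i => f (i + 1 : ℕ)) 0 m 1, ← range_eq_Ico]
  have := Fin.sum_univ_eq_sum_range (fun k => f k) (m + 2)
  simp only [Fin.cast_val_eq_self] at this
  rw [this, sum_range_succ', sum_range_succ']
  simp only [Nat.cast_zero, Nat.cast_one, zero_add]
  abel

lemma Amat_mulVec_apply (k : Fin (m + 2)) :
    (Amat s₁ s₂ r a m *ᵥ w) k = Amat s₁ s₂ r a m k 0 * w 0 + Amat s₁ s₂ r a m k 1 * w 1 +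
      ∑ i ∈ Icc 1 m, Amat s₁ s₂ r a m k (i + 1 : ℕ) * w (i + 1 : ℕ) :=
  Fin.sum_univ_add_two_eq _

lemma Amat_apply_natCast_add_one {k : Fin (m + 2)} {i : ℕ} (hi : i ∈ Icc 1 m) :
    Amat s₁ s₂ r a m k (i + 1 : ℕ) =
      if k.val = 0 then 0
      else if k.val = 1 then (if i = m then 1 / (s₁ + 2 * r * s₁ * a) else 0)
      else if k.val = 2 then 1 / (s₂ + 2 * r * s₂ * a)
      else if i + 2 = k.val then 1 / (s₁ + 2 * r * s₁ * a) else 0 := by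
  simp only [mem_Icc] at hi
  simp only [Amat, Matrix.of_apply, Fin.val_cast_of_lt (show i + 1 < m + 2 by omega)]
  split_ifs <;> first | rfl | contradiction | omega

lemma Amat_mulVec_zero : (Amat s₁ s₂ r a m *ᵥ w) 0 = w 0 / 2 + w 1 / (2 * s₂) := by
  rw [Amat_mulVec_apply, sum_eq_zero fun i hi => by rw [Amat_apply_natCast_add_one hi]; simp]
  simp only [Amat, Fin.val_eq_zero_iff, one_div, mul_inv_rev, Matrix.of_apply, ↓reduceIte,
    one_ne_zero, Fin.coe_ofNat_eq_mod, Nat.one_mod, add_zero]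
  ring

lemma Amat_mulVec_one (hm : 1 ≤ m) :
    (Amat s₁ s₂ r a m *ᵥ w) 1 =
      w 0 / (1 + 2 * r * a) + (w 1 + w (m + 1 : ℕ)) / (s₁ + 2 * r * s₁ * a) := by
  rw [Amat_mulVec_apply, sum_congr rfl fun i hi => by rw [Amat_apply_natCast_add_one hi]]
  simp only [Amat, Fin.val_eq_zero_iff, one_div, mul_inv_rev, Matrix.of_apply, one_ne_zero,
    ↓reduceIte, Fin.coe_ofNat_eq_mod, Nat.one_mod, Nat.right_eq_add, true_or, Nat.cast_add,
    Nat.cast_one, ite_mul, zero_mul, sum_ite_eq', mem_Icc, hm, le_refl, and_self]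
  ring

lemma Amat_mulVec_two (hm : 1 ≤ m) :
    (Amat s₁ s₂ r a m *ᵥ w) (2 : ℕ) =
      (w 1 + ∑ i ∈ Icc 1 m, w (i + 1 : ℕ)) / (s₂ + 2 * r * s₂ * a) := by
  have h2 : ((2 : ℕ) : Fin (m + 2)).val = 2 := Fin.val_cast_of_lt (by omega)
  rw [Amat_mulVec_apply, sum_congr rfl fun i hi => by rw [Amat_apply_natCast_add_one hi, h2]]
  simp only [Amat, Matrix.of_apply, h2, Fin.val_zero, Fin.val_one]
  simp only [OfNat.ofNat_ne_zero, ↓reduceIte, OfNat.ofNat_ne_one, nonpos_iff_eq_zero,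
    one_ne_zero, zero_mul, le_refl, one_div, zero_add, Nat.cast_add, Nat.cast_one, ← mul_sum]
  ring

lemma Amat_mulVec_natCast_add_two {k : ℕ} (hk : k ∈ Ico 1 m) :
    (Amat s₁ s₂ r a m *ᵥ w) (k + 2 : ℕ) = w (k + 1 : ℕ) / (s₁ + 2 * r * s₁ * a) := by
  simp only [mem_Ico] at hk
  have hk2 : ((k + 2 : ℕ) : Fin (m + 2)).val = k + 2 := Fin.val_cast_of_lt (by omega)
  rw [Amat_mulVec_apply, sum_congr rfl fun i hi => by rw [Amat_apply_natCast_add_one hi, hk2]]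
  simp only [Amat, Matrix.of_apply, hk2, Fin.val_zero, Fin.val_one]
  simp only [Nat.add_eq_zero_iff, show k ≠ 0 by omega, OfNat.ofNat_ne_zero, and_self,
    ↓reduceIte, Nat.reduceEqDiff, Nat.add_eq_right, zero_add, Nat.right_eq_add, one_ne_zero,
    zero_mul, Nat.reduceAdd, add_zero, Nat.add_right_cancel_iff, one_div, Nat.cast_add,
    Nat.cast_one, ite_mul, sum_ite_eq', mem_Icc, hk.1, hk.2.le]
  ring

end MatrixRows

lemma indicator_Icc_congr_left {α M : Type*} [Preorder α] [Zero M] {c : M} {q q' b y y' : α}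
    (h : q ≤ y ↔ q' ≤ y') (hy : y ≤ b) (hy' : y' ≤ b) :
    (Set.Icc q b).indicator (fun _ => c) y = (Set.Icc q' b).indicator (fun _ => c) y' := by
  classical
  simp only [Set.indicator_apply, Set.mem_Icc, h, hy, hy', and_true]

lemma indicator_Icc_of_le {α M : Type*} [Preorder α] [Zero M] {c : M} {q b y : α} (h : q ≤ y) :
    (Set.Icc q b).indicator (fun _ => c) y = (Set.Iic b).indicator (fun _ => c) y := by
  classical
  simp only [Set.indicator_apply, Set.mem_Icc, Set.mem_Iic, h, true_and]

section StepFunction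

variable (p : ℕ → ℝ) (m : ℕ) (v : ℕ → ℝ)

/-- The paper's `c + α₀ 1_{I₀} + ∑ αᵢ 1_{Iᵢ}` with `I₀ = [0, p 0]`, `Iᵢ = [p i, p 0]` and
`(c, α₀, α₁, …, α_m) = (v 0, v 1, …, v (m + 1))`. -/
noncomputable def stepFn (y : ℝ) : ℝ :=
  v 0 + v 1 * (Set.Icc 0 (p 0)).indicator (fun _ => 1) y +
    ∑ i ∈ Icc 1 m, v (i + 1) * (Set.Icc (p i) (p 0)).indicator (fun _ => 1) y

variable {p m v} {x y : ℝ}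

lemma stepFn_of_gt (hy : p 0 < y) : stepFn p m v y = v 0 := by
  have hout : ∀ q, (Set.Icc q (p 0)).indicator (fun _ => (1 : ℝ)) y = 0 := fun q =>
    Set.indicator_of_notMem (fun h => hy.not_ge h.2) _
  simp [stepFn, hout]

lemma stepFn_of_lt (hy₀ : 0 ≤ y) (hy : y ≤ p 0) (hlt : ∀ i ∈ Icc 1 m, y < p i) :
    stepFn p m v y = v 0 + v 1 := by
  rw [stepFn, Set.indicator_of_mem (Set.mem_Icc.2 ⟨hy₀, hy⟩), sum_eq_zero fun i hi => by
    rw [Set.indicator_of_notMem fun h => (hlt i hi).not_ge h.1, mul_zero]]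
  ring

lemma stepFn_of_ge (hy₀ : 0 ≤ y) (hge : ∀ i ∈ Icc 1 m, p i ≤ y) :
    stepFn p m v y =
      v 0 + (v 1 + ∑ i ∈ Icc 1 m, v (i + 1)) * (Set.Iic (p 0)).indicator (fun _ => 1) y := by
  rw [stepFn, indicator_Icc_of_le hy₀,
    sum_congr rfl fun i hi => by rw [indicator_Icc_of_le (hge i hi)], ← sum_mul]
  ring

lemma stepFn_of_shift (hm : 1 ≤ m) (hy₀ : 0 ≤ y) (hy : y ≤ p 0) (hx : x ≤ p 0) (htop : p m ≤ y)
    (hshift : ∀ i ∈ Ico 1 m, p i ≤ y ↔ p (i + 1) ≤ x) :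
    stepFn p m v y = v 0 + v 1 + v (m + 1) +
      ∑ i ∈ Ico 1 m, v (i + 1) * (Set.Icc (p (i + 1)) (p 0)).indicator (fun _ => 1) x := by
  rw [stepFn, Set.indicator_of_mem (Set.mem_Icc.2 ⟨hy₀, hy⟩), ← Ico_add_one_right_eq_Icc,
    sum_Ico_succ_top hm,
    Set.indicator_of_mem (Set.mem_Icc.2 ⟨htop, hy⟩), sum_congr rfl fun i hi => by
      rw [indicator_Icc_congr_left (hshift i hi) hy hx]]
  ring

lemma stepFn_of_mem (hm : 1 ≤ m) :
    stepFn p m v x = v 0 + v 1 * (Set.Icc 0 (p 0)).indicator (fun _ => 1) x +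
      v 2 * (Set.Icc (p 1) (p 0)).indicator (fun _ => 1) x +
      ∑ i ∈ Ico 1 m, v (i + 2) * (Set.Icc (p (i + 1)) (p 0)).indicator (fun _ => 1) x := by
  rw [stepFn, ← Ico_add_one_right_eq_Icc, sum_eq_sum_Ico_succ_bot (by omega),
    ← sum_Ico_add' _ 1 m 1]
  ring

end StepFunction

section PerronFrobenius

variable {s₁ s₂ r a x : ℝ} {m : ℕ} {v : ℕ → ℝ}

lemma one_div_two_mul_add_one_div_two_mul (hsum : 1 / s₁ + 1 / s₂ = 1) :
    1 / (2 * s₂) + 1 / (2 * s₁) = 1 / 2 := by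
  rw [← one_div_mul_one_div, ← one_div_mul_one_div, ← mul_add, add_comm, hsum, mul_one]

lemma one_div_scaled_add_one_div_scaled (hsum : 1 / s₁ + 1 / s₂ = 1) :
    1 / (s₁ + 2 * r * s₁ * a) + 1 / (s₂ + 2 * r * s₂ * a) = 1 / (1 + 2 * r * a) := by
  rw [show s₁ + 2 * r * s₁ * a = s₁ * (1 + 2 * r * a) by ring,
    show s₂ + 2 * r * s₂ * a = s₂ * (1 + 2 * r * a) by ring, ← div_div, ← div_div, ← add_div, hsum]

lemma orbitW_succ {i : ℕ} (hi : 1 ≤ i) :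
    orbitW s₁ s₂ r a (i + 1) =
      (s₁ + 2 * r * s₁ * a) * (orbitW s₁ s₂ r a i - 1 / 2 + 1 / (2 * s₁)) := by
  obtain ⟨n, rfl⟩ : ∃ n, i = n + 1 := ⟨i - 1, by omega⟩
  rfl

lemma orbitW_le_iff {i : ℕ} (hi : 1 ≤ i) (hd : 0 < s₁ + 2 * r * s₁ * a) :
    orbitW s₁ s₂ r a i ≤ x / (s₁ + 2 * r * s₁ * a) + 1 / 2 - 1 / (2 * s₁) ↔
      orbitW s₁ s₂ r a (i + 1) ≤ x := by
  rw [orbitW_succ hi, ← le_div_iff₀' hd]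
  constructor <;> intro h <;> linarith

lemma le_orbitW_zero_iff (hd : 0 < s₂ + 2 * r * s₂ * a) :
    1 / 2 + 1 / (2 * s₂) - x / (s₂ + 2 * r * s₂ * a) ≤ orbitW s₁ s₂ r a 0 ↔
      orbitW s₁ s₂ r a 1 ≤ x := by
  rw [orbitW, orbitW, ← le_div_iff₀' hd]
  constructor <;> intro h <;> linarith

lemma orbitW_mem_Ico (hs₁ : 0 < s₁)
    (horbit : ∀ i : ℕ, 1 ≤ i → i ≤ m - 1 →
      orbitW s₁ s₂ r a i ∈ Set.Ico (1 / 2 - 1 / (2 * s₁)) (1 / 2))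
    (horbitm : orbitW s₁ s₂ r a m = 1 / 2 - 1 / (2 * s₁)) :
    ∀ i ∈ Icc 1 m, orbitW s₁ s₂ r a i ∈ Set.Ico (1 / 2 - 1 / (2 * s₁)) (1 / 2) := by
  intro i hi
  rw [mem_Icc] at hi
  rcases hi.2.lt_or_eq with hlt | rfl
  · exact horbit i hi.1 (by omega)
  · rw [horbitm]
    exact ⟨le_rfl, by linarith [show 0 < 1 / (2 * s₁) by positivity]⟩

lemma div_scaled_le {s : ℝ} (hs : 0 < s) (hra : 0 ≤ r * a) (hx : x ≤ 1 / 2 + r * a) :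
    x / (s + 2 * r * s * a) ≤ 1 / (2 * s) := by
  have hd : 0 < s + 2 * r * s * a := by nlinarith
  calc x / (s + 2 * r * s * a) ≤ (1 / 2 + r * a) / (s + 2 * r * s * a) := by gcongr
    _ = 1 / (2 * s) := by rw [div_eq_div_iff hd.ne' (by positivity)]; ring

lemma stepFn_orbitW_branch₁ (hs₁ : 0 < s₁) (hs₂ : 0 < s₂) (hsum : 1 / s₁ + 1 / s₂ = 1)
    (hra : 0 ≤ r * a)
    (hp : ∀ i ∈ Icc 1 m, orbitW s₁ s₂ r a i ∈ Set.Ico (1 / 2 - 1 / (2 * s₁)) (1 / 2))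
    (hx₀ : 0 < x) (hx₁ : x ≤ 1) :
    stepFn (orbitW s₁ s₂ r a) m v ((1 - x) / (2 * s₂)) = v 0 + v 1 := by
  have hy : (1 - x) / (2 * s₂) < 1 / (2 * s₂) := by gcongr; linarith
  have hs := one_div_two_mul_add_one_div_two_mul hsum
  have : 0 < 1 / (2 * s₁) := by positivity
  refine stepFn_of_lt (by positivity) ?_ fun i hi => ?_
  · change _ ≤ 1 / 2 + r * a
    linarith
  · linarith [(hp i hi).1]

lemma stepFn_orbitW_branch₂ (hs₁ : 1 < s₁) (hra : 0 ≤ r * a) (hm : 1 ≤ m)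
    (hpm : orbitW s₁ s₂ r a m = 1 / 2 - 1 / (2 * s₁)) (hx₀ : 0 ≤ x)
    (hxp : x ≤ orbitW s₁ s₂ r a 0) :
    stepFn (orbitW s₁ s₂ r a) m v (x / (s₁ + 2 * r * s₁ * a) + 1 / 2 - 1 / (2 * s₁)) =
      v 0 + v 1 + v (m + 1) + ∑ i ∈ Ico 1 m, v (i + 1) *
        (Set.Icc (orbitW s₁ s₂ r a (i + 1)) (orbitW s₁ s₂ r a 0)).indicator (fun _ => 1) x := by
  have hd : 0 < s₁ + 2 * r * s₁ * a := by nlinarith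
  have hxd := div_scaled_le (zero_lt_one.trans hs₁) hra hxp
  have : 1 / (2 * s₁) < 1 / 2 := by gcongr; linarith
  refine stepFn_of_shift hm (by linarith [div_nonneg hx₀ hd.le]) ?_ hxp ?_
    fun i hi => orbitW_le_iff (mem_Ico.1 hi).1 hd
  · change _ ≤ 1 / 2 + r * a
    linarith
  · rw [hpm]
    linarith [div_nonneg hx₀ hd.le]

lemma stepFn_orbitW_branch₃ (hs₂ : 0 < s₂) (hra : 0 ≤ r * a)
    (hp : ∀ i ∈ Icc 1 m, orbitW s₁ s₂ r a i ∈ Set.Ico (1 / 2 - 1 / (2 * s₁)) (1 / 2))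
    (hxp : x ≤ orbitW s₁ s₂ r a 0) :
    stepFn (orbitW s₁ s₂ r a) m v (1 / 2 + 1 / (2 * s₂) - x / (s₂ + 2 * r * s₂ * a)) =
      v 0 + (v 1 + ∑ i ∈ Icc 1 m, v (i + 1)) *
        (Set.Icc (orbitW s₁ s₂ r a 1) (orbitW s₁ s₂ r a 0)).indicator (fun _ => 1) x := by
  have hd : 0 < s₂ + 2 * r * s₂ * a := by nlinarith
  have hxd := div_scaled_le hs₂ hra hxp
  rw [stepFn_of_ge (by linarith [show 0 ≤ 1 / (2 * s₂) by positivity]) fun i hi => by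
    linarith [(hp i hi).2]]
  simp only [Set.indicator_apply, Set.mem_Iic, Set.mem_Icc, le_orbitW_zero_iff hd, hxp, and_true]

lemma stepFn_orbitW_branch₄ (hs₁ : 0 < s₁) (hsum : 1 / s₁ + 1 / s₂ = 1)
    (hra : r * a < 1 / (2 * s₂)) (hx₀ : 0 ≤ x) :
    stepFn (orbitW s₁ s₂ r a) m v ((x - 1) / (2 * s₁) + 1) = v 0 := by
  have hs := one_div_two_mul_add_one_div_two_mul hsum
  have : -(1 / (2 * s₁)) ≤ (x - 1) / (2 * s₁) := by
    rw [neg_div', div_le_div_iff_of_pos_right (by positivity)]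
    linarith
  exact stepFn_of_gt (by change 1 / 2 + r * a < _; linarith)

lemma Pa_stepFn_of_le (hs₁ : 1 < s₁) (hs₂ : 0 < s₂) (hsum : 1 / s₁ + 1 / s₂ = 1)
    (hra₀ : 0 ≤ r * a) (hra : r * a < 1 / (2 * s₂)) (hm : 1 ≤ m)
    (hp : ∀ i ∈ Icc 1 m, orbitW s₁ s₂ r a i ∈ Set.Ico (1 / 2 - 1 / (2 * s₁)) (1 / 2))
    (hpm : orbitW s₁ s₂ r a m = 1 / 2 - 1 / (2 * s₁)) (hx₀ : 0 < x) (hx₁ : x ≤ 1)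
    (hxp : x ≤ orbitW s₁ s₂ r a 0) :
    Pa s₁ s₂ r a (stepFn (orbitW s₁ s₂ r a) m v) x =
      v 0 / 2 + v 1 / (2 * s₂) +
        (v 0 / (1 + 2 * r * a) + (v 1 + v (m + 1)) / (s₁ + 2 * r * s₁ * a)) +
        (v 1 + ∑ i ∈ Icc 1 m, v (i + 1)) / (s₂ + 2 * r * s₂ * a) *
          (Set.Icc (orbitW s₁ s₂ r a 1) (orbitW s₁ s₂ r a 0)).indicator (fun _ => 1) x +
        (∑ i ∈ Ico 1 m, v (i + 1) *
          (Set.Icc (orbitW s₁ s₂ r a (i + 1)) (orbitW s₁ s₂ r a 0)).indicator (fun _ => 1) x) /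
          (s₁ + 2 * r * s₁ * a) := by
  rw [Pa, stepFn_orbitW_branch₁ (zero_lt_one.trans hs₁) hs₂ hsum hra₀ hp hx₀ hx₁,
    stepFn_orbitW_branch₂ hs₁ hra₀ hm hpm hx₀.le hxp,
    stepFn_orbitW_branch₃ hs₂ hra₀ hp hxp,
    stepFn_orbitW_branch₄ (zero_lt_one.trans hs₁) hsum hra hx₀.le,
    Set.indicator_of_mem (show x ∈ Set.Icc 0 (1 / 2 + r * a) from ⟨hx₀.le, hxp⟩)]
  linear_combination v 0 * one_div_two_mul_add_one_div_two_mul hsum +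
    v 0 * one_div_scaled_add_one_div_scaled (r := r) (a := a) hsum

lemma Pa_stepFn_of_gt (hs₁ : 0 < s₁) (hs₂ : 0 < s₂) (hsum : 1 / s₁ + 1 / s₂ = 1)
    (hra₀ : 0 ≤ r * a) (hra : r * a < 1 / (2 * s₂))
    (hp : ∀ i ∈ Icc 1 m, orbitW s₁ s₂ r a i ∈ Set.Ico (1 / 2 - 1 / (2 * s₁)) (1 / 2))
    (hx₀ : 0 < x) (hx₁ : x ≤ 1) (hxp : orbitW s₁ s₂ r a 0 < x) :
    Pa s₁ s₂ r a (stepFn (orbitW s₁ s₂ r a) m v) x = v 0 / 2 + v 1 / (2 * s₂) := by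
  rw [Pa, stepFn_orbitW_branch₁ hs₁ hs₂ hsum hra₀ hp hx₀ hx₁,
    stepFn_orbitW_branch₄ hs₁ hsum hra hx₀.le,
    Set.indicator_of_notMem (show x ∉ Set.Icc 0 (1 / 2 + r * a) from fun h => hxp.not_ge h.2)]
  linear_combination v 0 * one_div_two_mul_add_one_div_two_mul hsum

end PerronFrobenius


theorem stmt_4 (s₁ s₂ r a : ℝ) (hs₁ : 1 < s₁) (hs₂ : 1 < s₂)
    (hsum : 1 / s₁ + 1 / s₂ = 1) (hr : 0 < r) (ha : 0 < a)
    (hra : r * a < 1 / (2 * s₂)) (m : ℕ) (hm : 1 ≤ m)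
    (horbit : ∀ i : ℕ, 1 ≤ i → i ≤ m - 1 →
      orbitW s₁ s₂ r a i ∈ Set.Ico (1 / 2 - 1 / (2 * s₁)) (1 / 2))
    (horbitm : orbitW s₁ s₂ r a m = 1 / 2 - 1 / (2 * s₁)) :
    ∀ w : Fin (m + 2) → ℝ,
      ∀ᵐ x ∂(volume.restrict (Set.Icc (0 : ℝ) 1)),
        Pa s₁ s₂ r a
          (fun y => w 0 +
            w 1 * (Set.Icc (0 : ℝ) (1 / 2 + r * a)).indicator (fun _ => (1 : ℝ)) y +
            ∑ i ∈ Finset.Icc 1 m, w ((i + 1 : ℕ)) *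
              (Set.Icc (orbitW s₁ s₂ r a i) (1 / 2 + r * a)).indicator (fun _ => (1 : ℝ)) y)
          x
        = ((Amat s₁ s₂ r a m).mulVec w) 0 +
          ((Amat s₁ s₂ r a m).mulVec w) 1 *
            (Set.Icc (0 : ℝ) (1 / 2 + r * a)).indicator (fun _ => (1 : ℝ)) x +
          ∑ i ∈ Finset.Icc 1 m, ((Amat s₁ s₂ r a m).mulVec w) ((i + 1 : ℕ)) *
            (Set.Icc (orbitW s₁ s₂ r a i) (1 / 2 + r * a)).indicator (fun _ => (1 : ℝ)) x := by
  intro w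
  have hs₁₀ : 0 < s₁ := zero_lt_one.trans hs₁
  have hs₂₀ : 0 < s₂ := zero_lt_one.trans hs₂
  have hra₀ : 0 ≤ r * a := (mul_pos hr ha).le
  have hp := orbitW_mem_Ico hs₁₀ horbit horbitm
  filter_upwards [ae_restrict_mem measurableSet_Icc, ae_restrict_of_ae (Measure.ae_ne volume 0)]
    with x ⟨hx₀, hx₁⟩ hx
  change Pa s₁ s₂ r a (stepFn (orbitW s₁ s₂ r a) m fun k => w k) x =
    stepFn (orbitW s₁ s₂ r a) m (fun k => (Amat s₁ s₂ r a m *ᵥ w) k) x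
  rcases le_or_gt x (orbitW s₁ s₂ r a 0) with hxp | hxp
  · rw [stepFn_of_mem hm, sum_congr rfl fun i hi => by
        rw [Amat_mulVec_natCast_add_two w hi, div_mul_eq_mul_div], ← sum_div, Amat_mulVec_two w hm,
      Set.indicator_of_mem (Set.mem_Icc.2 ⟨hx₀, hxp⟩), mul_one,
      Pa_stepFn_of_le hs₁ hs₂₀ hsum hra₀ hra hm hp horbitm (hx₀.lt_of_ne' hx) hx₁ hxp]
    simp only [Nat.cast_zero, Nat.cast_one, Amat_mulVec_zero, Amat_mulVec_one w hm]
  · rw [Pa_stepFn_of_gt hs₁₀ hs₂₀ hsum hra₀ hra hp (hx₀.lt_of_ne' hx) hx₁ hxp, stepFn_of_gt hxp]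
    simp only [Nat.cast_zero, Nat.cast_one, Amat_mulVec_zero]
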